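/- arXiv:1309.0661 — 3 statements merged into one kernel-verified Lean document; each statement's English description precedes it below -/
import Mathlib

section
/- Let w₀, w₁, w₂, d be positive integers, let Q(X) = (1+dX)·(1+w₀X)⁻¹ ∈ ℚ[[X]], let γ₁, γ₂, γ₃ ∈ ℚ be the coefficients of X, X², X³ in Q, and set S₀ = d/w₀, S₁ = S₀γ₁, S₂ = S₀γ₁², S₀₁ = S₀γ₂. Then (1/(3w₀w₁w₂))·(1/2)·( γ₁S₁² − 4γ₂S₁ − 4γ₁S₂ − 2γ₁S₀₁ − 8γ₁²S₁ + 40γ₁³ + 56γ₁γ₂ + 24γ₃ ) = (d−w₀)(d−2w₀)(d−3w₀)(d−4w₀)(d−5w₀)/(6w₀³w₁w₂). -/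
/-! Since `(1 + dX)/(1 + wX) = 1 + (d - w)X·∑ (-wX)ᵏ`, the coefficients are `γₖ₊₁ = (d - w)(-w)ᵏ`.
Substituting them and `S₀ = d/w`, the bracket of `tp(A₁³)` becomes `(d - w)(d - 2w)⋯(d - 5w)/w²`,
a polynomial identity once `w²` is cleared. -/

open PowerSeries

/-- The linear power series `1 + r·X` over `ℚ`. -/
noncomputable def lin (r : ℚ) : ℚ⟦X⟧ := 1 + C r * X

lemma lin_eq_rescale (r : ℚ) : lin r = rescale (-r) (1 - X) := by
  simp [lin, rescale_X, sub_eq_add_neg]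

lemma inv_lin (r : ℚ) : (lin r)⁻¹ = mk fun n => (-r) ^ n := by
  rw [inv_eq_iff_mul_eq_one (by simp [lin]), lin_eq_rescale]
  have hmk : (mk fun n => (-r) ^ n) = rescale (-r) (mk 1) := by
    ext n
    simp [coeff_rescale]
  rw [hmk, ← map_mul, mk_one_mul_one_sub_eq_one, map_one]

lemma coeff_succ_lin_mul_inv_lin (d w : ℚ) (n : ℕ) :
    coeff (n + 1) (lin d * (lin w)⁻¹) = (d - w) * (-w) ^ n := by
  rw [inv_lin, lin, add_mul, one_mul, mul_assoc, map_add, coeff_C_mul, coeff_succ_X_mul, coeff_mk,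
    coeff_mk, pow_succ]
  ring

lemma tripleFoldBracket_eq {d w : ℚ} (hw : w ≠ 0) {γ₁ γ₂ γ₃ S₀ : ℚ} (hγ₁ : γ₁ = d - w)
    (hγ₂ : γ₂ = (d - w) * -w) (hγ₃ : γ₃ = (d - w) * w ^ 2) (hS₀ : S₀ = d / w) :
    γ₁ * (S₀ * γ₁) ^ 2 - 4 * γ₂ * (S₀ * γ₁) - 4 * γ₁ * (S₀ * γ₁ ^ 2) - 2 * γ₁ * (S₀ * γ₂)
        - 8 * γ₁ ^ 2 * (S₀ * γ₁) + 40 * γ₁ ^ 3 + 56 * γ₁ * γ₂ + 24 * γ₃ =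
      (d - w) * (d - 2 * w) * (d - 3 * w) * (d - 4 * w) * (d - 5 * w) / w ^ 2 := by
  subst hγ₁ hγ₂ hγ₃ hS₀
  field_simp
  ring

theorem stmt_6_general (w₀ w₁ w₂ d : ℕ) (hw₀ : 0 < w₀)
    (Q : ℚ⟦X⟧) (hQ : Q = lin (d : ℚ) * (lin (w₀ : ℚ))⁻¹)
    (γ₁ γ₂ γ₃ : ℚ) (hγ₁ : γ₁ = coeff 1 Q) (hγ₂ : γ₂ = coeff 2 Q)
    (hγ₃ : γ₃ = coeff 3 Q)
    (S₀ S₁ S₂ S₀₁ : ℚ) (hS₀ : S₀ = (d : ℚ) / (w₀ : ℚ)) (hS₁ : S₁ = S₀ * γ₁)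
    (hS₂ : S₂ = S₀ * γ₁ ^ 2) (hS₀₁ : S₀₁ = S₀ * γ₂) :
    (1 / (3 * (w₀ : ℚ) * (w₁ : ℚ) * (w₂ : ℚ))) * (1 / 2) *
        (γ₁ * S₁ ^ 2 - 4 * γ₂ * S₁ - 4 * γ₁ * S₂ - 2 * γ₁ * S₀₁ - 8 * γ₁ ^ 2 * S₁
          + 40 * γ₁ ^ 3 + 56 * γ₁ * γ₂ + 24 * γ₃) =
      ((d : ℚ) - (w₀ : ℚ)) * ((d : ℚ) - 2 * (w₀ : ℚ)) * ((d : ℚ) - 3 * (w₀ : ℚ)) *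
          ((d : ℚ) - 4 * (w₀ : ℚ)) * ((d : ℚ) - 5 * (w₀ : ℚ)) /
        (6 * (w₀ : ℚ) ^ 3 * (w₁ : ℚ) * (w₂ : ℚ)) := by
  have hγ₁' : γ₁ = d - w₀ := by
    rw [hγ₁, hQ]; simpa using coeff_succ_lin_mul_inv_lin d w₀ 0
  have hγ₂' : γ₂ = (d - w₀) * -w₀ := by
    rw [hγ₂, hQ]; simpa using coeff_succ_lin_mul_inv_lin d w₀ 1
  have hγ₃' : γ₃ = (d - w₀) * w₀ ^ 2 := by
    rw [hγ₃, hQ]; simpa using coeff_succ_lin_mul_inv_lin d w₀ 2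
  subst hS₁ hS₂ hS₀₁
  rw [tripleFoldBracket_eq (by positivity) hγ₁' hγ₂' hγ₃' hS₀]
  ring

theorem stmt_6 (w₀ w₁ w₂ d : ℕ) (hw₀ : 0 < w₀) (hw₁ : 0 < w₁) (hw₂ : 0 < w₂)
    (hd : 0 < d)
    (Q : ℚ⟦X⟧) (hQ : Q = lin (d : ℚ) * (lin (w₀ : ℚ))⁻¹)
    (γ₁ γ₂ γ₃ : ℚ) (hγ₁ : γ₁ = coeff 1 Q) (hγ₂ : γ₂ = coeff 2 Q)
    (hγ₃ : γ₃ = coeff 3 Q)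
    (S₀ S₁ S₂ S₀₁ : ℚ) (hS₀ : S₀ = (d : ℚ) / (w₀ : ℚ)) (hS₁ : S₁ = S₀ * γ₁)
    (hS₂ : S₂ = S₀ * γ₁ ^ 2) (hS₀₁ : S₀₁ = S₀ * γ₂) :
    (1 / (3 * (w₀ : ℚ) * (w₁ : ℚ) * (w₂ : ℚ))) * (1 / 2) *
        (γ₁ * S₁ ^ 2 - 4 * γ₂ * S₁ - 4 * γ₁ * S₂ - 2 * γ₁ * S₀₁ - 8 * γ₁ ^ 2 * S₁
          + 40 * γ₁ ^ 3 + 56 * γ₁ * γ₂ + 24 * γ₃) =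
      ((d : ℚ) - (w₀ : ℚ)) * ((d : ℚ) - 2 * (w₀ : ℚ)) * ((d : ℚ) - 3 * (w₀ : ℚ)) *
          ((d : ℚ) - 4 * (w₀ : ℚ)) * ((d : ℚ) - 5 * (w₀ : ℚ)) /
        (6 * (w₀ : ℚ) ^ 3 * (w₁ : ℚ) * (w₂ : ℚ)) :=
  stmt_6_general w₀ w₁ w₂ d hw₀ Q hQ γ₁ γ₂ γ₃ hγ₁ hγ₂ hγ₃ S₀ S₁ S₂ S₀₁ hS₀ hS₁ hS₂ hS₀₁
end

section
/- Let w₁, w₂, d₁, d₂, d₃ be positive integers, let Q(X) = (1+d₁X)(1+d₂X)(1+d₃X)·((1+w₁X)(1+w₂X))⁻¹ ∈ ℚ[[X]], let γ₁, γ₂ ∈ ℚ be the coefficients of X and X² in Q, set S₀ = d₁d₂d₃/(w₁w₂) and S₁ = S₀γ₁, and let T(X) = 1 + ½(γ₁−S₀)X + (1/6)(S₀² + 2S₁ − 2γ₁S₀ − γ₁² − γ₂)X². Then −1 + (1/(w₁w₂))·(coefficient of X² in (1+w₁X)(1+w₂X)·T(X)) = (1/(6w₁³w₂³))·( d₁²(d₂²d₃²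 − w₁²w₂²) − w₁²w₂²( d₂² + d₃² + 5w₁² + 9w₁w₂ + 5w₂² − 6d₃(w₁+w₂) + 3d₂(d₃ − 2(w₁+w₂)) ) − 3d₁w₁w₂( w₁w₂(d₃ − 2(w₁+w₂)) + d₂(w₁w₂ + d₃(w₁+w₂)) ) ). -/
/-!
Multiplying `Q` back by `(1 + w₁X)(1 + w₂X)` and comparing coefficients of `X⁰, X¹, X²` with
`(1 + d₁X)(1 + d₂X)(1 + d₃X)` expresses `γ₁, γ₂` polynomially in the weights and degrees; after
that substitution both sides are the same rational function of `w₁, w₂, d₁, d₂, d₃`.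
-/

open PowerSeries

lemma constantCoeff_lin (r : ℚ) : constantCoeff (lin r) = 1 := by
  simp [lin]

lemma coeff_zero_mul_lin (φ : ℚ⟦X⟧) (r : ℚ) : coeff 0 (φ * lin r) = coeff 0 φ := by
  simp [coeff_zero_eq_constantCoeff, constantCoeff_lin]

lemma coeff_succ_mul_lin (φ : ℚ⟦X⟧) (r : ℚ) (n : ℕ) :
    coeff (n + 1) (φ * lin r) = coeff (n + 1) φ + r * coeff n φ := by
  rw [lin, mul_add, mul_one, ← mul_assoc, map_add, coeff_succ_mul_X, coeff_mul_C, mul_comm]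

lemma coeff_two_mul_lin_mul_lin (φ : ℚ⟦X⟧) (a b : ℚ) :
    coeff 2 (φ * lin a * lin b) = coeff 2 φ + (a + b) * coeff 1 φ + a * b * coeff 0 φ := by
  simp only [coeff_succ_mul_lin]
  ring

lemma mul_inv_lin_mul_lin_cancel (φ : ℚ⟦X⟧) (a b : ℚ) :
    φ * (lin a * lin b)⁻¹ * lin a * lin b = φ := by
  rw [mul_assoc _ (lin a), mul_assoc,
    PowerSeries.inv_mul_cancel _ (by simp [constantCoeff_lin]), mul_one]

lemma coeff_two_lin_mul_lin_mul_quadratic (a b t₁ t₂ : ℚ) :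
    coeff 2 (lin a * lin b * (1 + C t₁ * X + C t₂ * X ^ 2)) = t₂ + (a + b) * t₁ + a * b := by
  rw [mul_comm, ← mul_assoc, coeff_two_mul_lin_mul_lin]
  simp [coeff_one, coeff_X_pow]

lemma coeff_quotient_of_mul_eq {Q : ℚ⟦X⟧} {a b c d e : ℚ}
    (h : Q * lin a * lin b = lin c * lin d * lin e) :
    coeff 1 Q = c + d + e - a - b ∧
      coeff 2 Q = c * d + c * e + d * e - (a + b) * (c + d + e - a - b) - a * b := by
  rw [← one_mul (lin c)] at h
  have h₀ := congrArg (coeff 0) h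
  have h₁ := congrArg (coeff 1) h
  have h₂ := congrArg (coeff 2) h
  simp only [coeff_zero_mul_lin, coeff_succ_mul_lin, coeff_one] at h₀ h₁ h₂
  norm_num [h₀] at h₁ h₂
  constructor
  · linear_combination h₁
  · linear_combination h₂ - (a + b) * h₁

theorem stmt_8_general (w₁ w₂ d₁ d₂ d₃ : ℕ) (hw₁ : 0 < w₁) (hw₂ : 0 < w₂)
    (Q : ℚ⟦X⟧)
    (hQ : Q = lin (d₁ : ℚ) * lin (d₂ : ℚ) * lin (d₃ : ℚ) *
        (lin (w₁ : ℚ) * lin (w₂ : ℚ))⁻¹)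
    (γ₁ γ₂ : ℚ) (hγ₁ : γ₁ = coeff 1 Q) (hγ₂ : γ₂ = coeff 2 Q)
    (S₀ S₁ : ℚ) (hS₀ : S₀ = (d₁ : ℚ) * (d₂ : ℚ) * (d₃ : ℚ) / ((w₁ : ℚ) * (w₂ : ℚ)))
    (hS₁ : S₁ = S₀ * γ₁)
    (T : ℚ⟦X⟧)
    (hT : T = 1 + C ((1 / 2) * (γ₁ - S₀)) * X
        + C ((1 / 6) * (S₀ ^ 2 + 2 * S₁ - 2 * γ₁ * S₀ - γ₁ ^ 2 - γ₂)) * X ^ 2) :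
    -1 + (1 / ((w₁ : ℚ) * (w₂ : ℚ))) * coeff 2 (lin (w₁ : ℚ) * lin (w₂ : ℚ) * T) =
      (1 / (6 * (w₁ : ℚ) ^ 3 * (w₂ : ℚ) ^ 3)) *
        ((d₁ : ℚ) ^ 2 * ((d₂ : ℚ) ^ 2 * (d₃ : ℚ) ^ 2 - (w₁ : ℚ) ^ 2 * (w₂ : ℚ) ^ 2)
          - (w₁ : ℚ) ^ 2 * (w₂ : ℚ) ^ 2 *
              ((d₂ : ℚ) ^ 2 + (d₃ : ℚ) ^ 2 + 5 * (w₁ : ℚ) ^ 2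
                + 9 * (w₁ : ℚ) * (w₂ : ℚ) + 5 * (w₂ : ℚ) ^ 2
                - 6 * (d₃ : ℚ) * ((w₁ : ℚ) + (w₂ : ℚ))
                + 3 * (d₂ : ℚ) * ((d₃ : ℚ) - 2 * ((w₁ : ℚ) + (w₂ : ℚ))))
          - 3 * (d₁ : ℚ) * (w₁ : ℚ) * (w₂ : ℚ) *
              ((w₁ : ℚ) * (w₂ : ℚ) * ((d₃ : ℚ) - 2 * ((w₁ : ℚ) + (w₂ : ℚ)))
                + (d₂ : ℚ) * ((w₁ : ℚ) * (w₂ : ℚ)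
                    + (d₃ : ℚ) * ((w₁ : ℚ) + (w₂ : ℚ))))) := by
  obtain ⟨hQ₁, hQ₂⟩ := coeff_quotient_of_mul_eq (Q := Q) (by rw [hQ, mul_inv_lin_mul_lin_cancel])
  rw [hT, coeff_two_lin_mul_lin_mul_quadratic]
  subst hS₁ hS₀ hγ₁ hγ₂
  rw [hQ₁, hQ₂]
  field_simp
  ring

theorem stmt_8 (w₁ w₂ d₁ d₂ d₃ : ℕ) (hw₁ : 0 < w₁) (hw₂ : 0 < w₂)
    (hd₁ : 0 < d₁) (hd₂ : 0 < d₂) (hd₃ : 0 < d₃)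
    (Q : ℚ⟦X⟧)
    (hQ : Q = lin (d₁ : ℚ) * lin (d₂ : ℚ) * lin (d₃ : ℚ) *
        (lin (w₁ : ℚ) * lin (w₂ : ℚ))⁻¹)
    (γ₁ γ₂ : ℚ) (hγ₁ : γ₁ = coeff 1 Q) (hγ₂ : γ₂ = coeff 2 Q)
    (S₀ S₁ : ℚ) (hS₀ : S₀ = (d₁ : ℚ) * (d₂ : ℚ) * (d₃ : ℚ) / ((w₁ : ℚ) * (w₂ : ℚ)))
    (hS₁ : S₁ = S₀ * γ₁)
    (T : ℚ⟦X⟧)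
    (hT : T = 1 + C ((1 / 2) * (γ₁ - S₀)) * X
        + C ((1 / 6) * (S₀ ^ 2 + 2 * S₁ - 2 * γ₁ * S₀ - γ₁ ^ 2 - γ₂)) * X ^ 2) :
    -1 + (1 / ((w₁ : ℚ) * (w₂ : ℚ))) * coeff 2 (lin (w₁ : ℚ) * lin (w₂ : ℚ) * T) =
      (1 / (6 * (w₁ : ℚ) ^ 3 * (w₂ : ℚ) ^ 3)) *
        ((d₁ : ℚ) ^ 2 * ((d₂ : ℚ) ^ 2 * (d₃ : ℚ) ^ 2 - (w₁ : ℚ) ^ 2 * (w₂ : ℚ) ^ 2)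
          - (w₁ : ℚ) ^ 2 * (w₂ : ℚ) ^ 2 *
              ((d₂ : ℚ) ^ 2 + (d₃ : ℚ) ^ 2 + 5 * (w₁ : ℚ) ^ 2
                + 9 * (w₁ : ℚ) * (w₂ : ℚ) + 5 * (w₂ : ℚ) ^ 2
                - 6 * (d₃ : ℚ) * ((w₁ : ℚ) + (w₂ : ℚ))
                + 3 * (d₂ : ℚ) * ((d₃ : ℚ) - 2 * ((w₁ : ℚ) + (w₂ : ℚ))))
          - 3 * (d₁ : ℚ) * (w₁ : ℚ) * (w₂ : ℚ) *
              ((w₁ : ℚ) * (w₂ : ℚ) * ((d₃ : ℚ) - 2 * ((w₁ : ℚ) + (w₂ : ℚ)))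
                + (d₂ : ℚ) * ((w₁ : ℚ) * (w₂ : ℚ)
                    + (d₃ : ℚ) * ((w₁ : ℚ) + (w₂ : ℚ))))) :=
  stmt_8_general w₁ w₂ d₁ d₂ d₃ hw₁ hw₂ Q hQ γ₁ γ₂ hγ₁ hγ₂ S₀ S₁ hS₀ hS₁ T hT
end

section
/- Let w₁, w₂, d₁, d₂ be positive integers, let Q(X) = (1+d₁X)(1+d₂X)·((1+w₁X)(1+w₂X))⁻¹ ∈ ℚ[[X]], let γ₁, γ₂ ∈ ℚ be the coefficients of X and X² in Q, set S₀ = d₁d₂/(w₁w₂) and S₁ = S₀γ₁, and let D(X) = γ₁X + (γ₁² + γ₂ − ½γ₁S₁)X². Then 1 − (1/(w₁w₂))·(coefficient of X² in (1+w₁X)(1+w₂X)·D(X)) = (1/(2w₁²w₂²))·(d₁d₂ − 2w₁w₂)·( d₁² + d₂² + w₁² + 2d₁(d₂ − w₁ − w₂) + w₂² − 2d₂(w₁ + w₂) ). -/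
/-!
Multiplying `Q` by `(1 + w₁X)(1 + w₂X)` gives `(1 + d₁X)(1 + d₂X)`, and comparing coefficients
expresses `γ₁ = (d₁ + d₂) - (w₁ + w₂)` and `γ₂` through the elementary symmetric functions of the
weights and degrees. The coefficient of `X²` in `(1 + w₁X)(1 + w₂X)·D` is then an explicit rational
function of `w₁, w₂, d₁, d₂`, and the identity is a polynomial identity after clearing `w₁w₂`.
-/

open PowerSeries

namespace PowerSeries

variable {R : Type*} [CommRing R]

theorem coeff_one_mul_one_add_X_add_X_sq (f : R⟦X⟧) (a b : R) :
    coeff 1 (f * (1 + C a * X + C b * X ^ 2)) = coeff 1 f + a * constantCoeff f := by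
  simp [mul_add, mul_left_comm f, coeff_mul_X_pow']

theorem coeff_two_mul_one_add_X_add_X_sq (f : R⟦X⟧) (a b : R) :
    coeff 2 (f * (1 + C a * X + C b * X ^ 2)) =
      coeff 2 f + a * coeff 1 f + b * constantCoeff f := by
  simp [mul_add, mul_left_comm f, coeff_mul_X_pow']

section QuotientOfQuadratics

variable {f : R⟦X⟧} {a b c e : R}
  (hf : f * (1 + C a * X + C b * X ^ 2) = 1 + C c * X + C e * X ^ 2)
include hf

theorem constantCoeff_eq_one_of_mul_eq : constantCoeff f = 1 := by
  simpa using congrArg constantCoeff hf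

theorem coeff_one_eq_of_mul_eq : coeff 1 f = c - a := by
  have h := congrArg (coeff 1) hf
  rw [coeff_one_mul_one_add_X_add_X_sq, constantCoeff_eq_one_of_mul_eq hf] at h
  simp at h
  linear_combination h

theorem coeff_two_eq_of_mul_eq : coeff 2 f = e - a * (c - a) - b := by
  have h := congrArg (coeff 2) hf
  rw [coeff_two_mul_one_add_X_add_X_sq, coeff_one_eq_of_mul_eq hf,
    constantCoeff_eq_one_of_mul_eq hf] at h
  simp [coeff_X_pow] at h
  linear_combination h

end QuotientOfQuadratics

end PowerSeries

theorem lin_mul_lin (r s : ℚ) : lin r * lin s = 1 + C (r + s) * X + C (r * s) * X ^ 2 := by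
  simp only [lin, map_add, map_mul]
  ring

theorem stmt_9_general (w₁ w₂ d₁ d₂ : ℕ) (hw₁ : 0 < w₁) (hw₂ : 0 < w₂)
    (Q : ℚ⟦X⟧)
    (hQ : Q = lin (d₁ : ℚ) * lin (d₂ : ℚ) * (lin (w₁ : ℚ) * lin (w₂ : ℚ))⁻¹)
    (γ₁ γ₂ : ℚ) (hγ₁ : γ₁ = coeff 1 Q) (hγ₂ : γ₂ = coeff 2 Q)
    (S₀ S₁ : ℚ) (hS₀ : S₀ = (d₁ : ℚ) * (d₂ : ℚ) / ((w₁ : ℚ) * (w₂ : ℚ)))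
    (hS₁ : S₁ = S₀ * γ₁)
    (D : ℚ⟦X⟧)
    (hD : D = C γ₁ * X + C (γ₁ ^ 2 + γ₂ - (1 / 2) * γ₁ * S₁) * X ^ 2) :
    1 - (1 / ((w₁ : ℚ) * (w₂ : ℚ))) * coeff 2 (lin (w₁ : ℚ) * lin (w₂ : ℚ) * D) =
      (1 / (2 * (w₁ : ℚ) ^ 2 * (w₂ : ℚ) ^ 2)) *
        ((d₁ : ℚ) * (d₂ : ℚ) - 2 * (w₁ : ℚ) * (w₂ : ℚ)) *
        ((d₁ : ℚ) ^ 2 + (d₂ : ℚ) ^ 2 + (w₁ : ℚ) ^ 2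
          + 2 * (d₁ : ℚ) * ((d₂ : ℚ) - (w₁ : ℚ) - (w₂ : ℚ)) + (w₂ : ℚ) ^ 2
          - 2 * (d₂ : ℚ) * ((w₁ : ℚ) + (w₂ : ℚ))) := by
  have hQ_mul : Q * (lin (w₁ : ℚ) * lin (w₂ : ℚ)) = lin (d₁ : ℚ) * lin (d₂ : ℚ) := by
    rw [hQ, mul_assoc, PowerSeries.inv_mul_cancel _ (by simp [lin]), mul_one]
  rw [lin_mul_lin, lin_mul_lin] at hQ_mul
  have hD_coeff : coeff 2 (lin (w₁ : ℚ) * lin (w₂ : ℚ) * D) =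
      γ₁ ^ 2 + γ₂ - (1 / 2) * γ₁ * S₁ + ((w₁ : ℚ) + w₂) * γ₁ := by
    rw [mul_comm, lin_mul_lin, coeff_two_mul_one_add_X_add_X_sq, hD]
    simp [coeff_mul_X_pow']
  rw [hD_coeff, hS₁, hS₀, hγ₂, coeff_two_eq_of_mul_eq hQ_mul, hγ₁, coeff_one_eq_of_mul_eq hQ_mul]
  have hw₁' : (w₁ : ℚ) ≠ 0 := by positivity
  have hw₂' : (w₂ : ℚ) ≠ 0 := by positivity
  field_simp
  ring

theorem stmt_9 (w₁ w₂ d₁ d₂ : ℕ) (hw₁ : 0 < w₁) (hw₂ : 0 < w₂)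
    (hd₁ : 0 < d₁) (hd₂ : 0 < d₂)
    (Q : ℚ⟦X⟧)
    (hQ : Q = lin (d₁ : ℚ) * lin (d₂ : ℚ) * (lin (w₁ : ℚ) * lin (w₂ : ℚ))⁻¹)
    (γ₁ γ₂ : ℚ) (hγ₁ : γ₁ = coeff 1 Q) (hγ₂ : γ₂ = coeff 2 Q)
    (S₀ S₁ : ℚ) (hS₀ : S₀ = (d₁ : ℚ) * (d₂ : ℚ) / ((w₁ : ℚ) * (w₂ : ℚ)))
    (hS₁ : S₁ = S₀ * γ₁)
    (D : ℚ⟦X⟧)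
    (hD : D = C γ₁ * X + C (γ₁ ^ 2 + γ₂ - (1 / 2) * γ₁ * S₁) * X ^ 2) :
    1 - (1 / ((w₁ : ℚ) * (w₂ : ℚ))) * coeff 2 (lin (w₁ : ℚ) * lin (w₂ : ℚ) * D) =
      (1 / (2 * (w₁ : ℚ) ^ 2 * (w₂ : ℚ) ^ 2)) *
        ((d₁ : ℚ) * (d₂ : ℚ) - 2 * (w₁ : ℚ) * (w₂ : ℚ)) *
        ((d₁ : ℚ) ^ 2 + (d₂ : ℚ) ^ 2 + (w₁ : ℚ) ^ 2
          + 2 * (d₁ : ℚ) * ((d₂ : ℚ) - (w₁ : ℚ) - (w₂ : ℚ)) + (w₂ : ℚ) ^ 2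
          - 2 * (d₂ : ℚ) * ((w₁ : ℚ) + (w₂ : ℚ))) :=
  stmt_9_general w₁ w₂ d₁ d₂ hw₁ hw₂ Q hQ γ₁ γ₂ hγ₁ hγ₂ S₀ S₁ hS₀ hS₁ D hD
end
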